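/- Let Roots = {L-root(j) : j ∈ R}, and for H ∈ Roots let pow(H) denote the prefix of length |H|·⌈τ/|H|⌉ of the infinite string HHH⋯. Then: (i) for all X, Y ∈ Roots, X ≺ Y implies pow(X) ≺ pow(Y); and (ii) the set {pow(H) : H ∈ Roots} is prefix-free, i.e., for all distinct X, Y ∈ Roots, pow(X) ≠ pow(Y) and pow(X) is not a prefix of pow(Y). -/

import Mathlib

open scoped Classical

namespace CSA

/-- Character of a 1-indexed string at position `i` (junk value 0 out of range). -/
def idx (S : List ℕ) (i : ℕ) : ℕ := S.getD (i - 1) 0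

/-- Substring `S[i..j)` in the 1-indexed, half-open convention. -/
def sub (S : List ℕ) (i j : ℕ) : List ℕ := (S.drop (i - 1)).take (j - i)

/-- Suffix `S[i..|S|]` (1-indexed). -/
def suf (S : List ℕ) (i : ℕ) : List ℕ := S.drop (i - 1)

/-- Length of the longest common prefix of two strings. -/
def lcp (A B : List ℕ) : ℕ := ((A.zip B).takeWhile fun p => p.1 == p.2).length

/-- `LCE T j₁ j₂` is the length of the longest common prefix of `T[j₁..n]` and `T[j₂..n]`. -/
def LCE (T : List ℕ) (j₁ j₂ : ℕ) : ℕ := lcp (suf T j₁) (suf T j₂)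

/-- `p` is a period of `S`. -/
def IsPeriod (S : List ℕ) (p : ℕ) : Prop :=
  1 ≤ p ∧ p ≤ S.length ∧ ∀ i, i + p < S.length → S.getD i 0 = S.getD (i + p) 0

/-- The shortest period of `S`. -/
noncomputable def per (S : List ℕ) : ℕ := sInf {p | IsPeriod S p}

/-- `R = {i ∈ [1..n−3τ+2] : per(T[i..i+3τ−1)) ≤ τ/3}`. -/
noncomputable def R (T : List ℕ) (τ : ℕ) : Set ℕ :=
  {i | 1 ≤ i ∧ i + 3 * τ ≤ T.length + 2 ∧ 3 * per (sub T i (i + 3 * τ - 1)) ≤ τ}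

/-- `rend(j) = min{j′ ≥ j : j′ ∉ R} + 3τ − 2`. -/
noncomputable def rend (T : List ℕ) (τ j : ℕ) : ℕ :=
  sInf {j' | j ≤ j' ∧ j' ∉ R T τ} + 3 * τ - 2

/-- `L-root(j)`: lexicographically smallest among `{T[j+t..j+t+p) : 0 ≤ t < p}`
where `p = per(T[j..j+3τ−1))`. -/
noncomputable def Lroot (T : List ℕ) (τ j : ℕ) : List ℕ :=
  (((Finset.range (per (sub T j (j + 3 * τ - 1)))).image fun t =>
      sub T (j + t) (j + t + per (sub T j (j + 3 * τ - 1)))).min).untopD []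

/-- `L-head(j)`: the (unique) `s ∈ [0..p)` with `T[j+s..j+s+p) = L-root(j)`. -/
noncomputable def Lhead (T : List ℕ) (τ j : ℕ) : ℕ :=
  sInf {s | s < per (sub T j (j + 3 * τ - 1)) ∧
    sub T (j + s) (j + s + per (sub T j (j + 3 * τ - 1))) = Lroot T τ j}

noncomputable def Lexp (T : List ℕ) (τ j : ℕ) : ℕ :=
  (rend T τ j - j - Lhead T τ j) / per (sub T j (j + 3 * τ - 1))

noncomputable def Ltail (T : List ℕ) (τ j : ℕ) : ℕ :=
  (rend T τ j - j - Lhead T τ j) % per (sub T j (j + 3 * τ - 1))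

noncomputable def rendfull (T : List ℕ) (τ j : ℕ) : ℕ := rend T τ j - Ltail T τ j

/-- `type(j) = +1` if `rend(j) ≤ n` and `T[rend(j)] > T[rend(j)−p]`, and `−1` otherwise. -/
noncomputable def typ (T : List ℕ) (τ j : ℕ) : ℤ :=
  if rend T τ j ≤ T.length ∧
      idx T (rend T τ j - per (sub T j (j + 3 * τ - 1))) < idx T (rend T τ j)
    then 1 else -1

noncomputable def Rminus (T : List ℕ) (τ : ℕ) : Set ℕ := {j ∈ R T τ | typ T τ j = -1}

noncomputable def RH (T : List ℕ) (τ : ℕ) (H : List ℕ) : Set ℕ :=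
  {j ∈ R T τ | Lroot T τ j = H}

noncomputable def RsH (T : List ℕ) (τ s : ℕ) (H : List ℕ) : Set ℕ :=
  {j ∈ R T τ | Lroot T τ j = H ∧ Lhead T τ j = s}

noncomputable def RminusH (T : List ℕ) (τ : ℕ) (H : List ℕ) : Set ℕ :=
  Rminus T τ ∩ RH T τ H

noncomputable def RminusSH (T : List ℕ) (τ s : ℕ) (H : List ℕ) : Set ℕ :=
  Rminus T τ ∩ RsH T τ s H

noncomputable def Rprime (T : List ℕ) (τ : ℕ) : Set ℕ := {j ∈ R T τ | j - 1 ∉ R T τ}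

/-- `Occ(P,S)`: the set of (1-indexed) starting positions of occurrences of `P` in `S`. -/
def OccSet (P S : List ℕ) : Set ℕ :=
  {j | 1 ≤ j ∧ j + P.length ≤ S.length + 1 ∧ sub S j (j + P.length) = P}

noncomputable def RangeBeg (P T : List ℕ) : ℕ :=
  Set.ncard {i | 1 ≤ i ∧ i ≤ T.length ∧ suf T i < P}

noncomputable def RangeEnd (P T : List ℕ) : ℕ := RangeBeg P T + (OccSet P T).ncard

/-- `ISA[j]`: the lexicographic rank of the suffix `T[j..n]` among all suffixes of `T`. -/
noncomputable def ISA (T : List ℕ) (j : ℕ) : ℕ :=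
  Set.ncard {j' | 1 ≤ j' ∧ j' ≤ T.length ∧ suf T j' ≤ suf T j}

/-- `succ_S(i) = min{j ∈ S ∪ {n−2τ+2} : j ≥ i}`. -/
noncomputable def succS (T : List ℕ) (τ : ℕ) (Sync : Set ℕ) (i : ℕ) : ℕ :=
  sInf {j | i ≤ j ∧ (j ∈ Sync ∨ j = T.length + 2 - 2 * τ)}

/-- The set `D` of distinguishing prefixes. -/
noncomputable def Dset (T : List ℕ) (τ : ℕ) (Sync : Set ℕ) : Set (List ℕ) :=
  {X | ∃ i, 1 ≤ i ∧ i + 3 * τ ≤ T.length + 2 ∧ i ∉ R T τ ∧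
    X = sub T i (succS T τ Sync i + 2 * τ)}

/-- `T^∞[i] = T[1 + ((i−1) mod n)]` for `i : ℤ`. -/
def tinf (T : List ℕ) (i : ℤ) : ℕ := idx T (((i - 1).emod (T.length : ℤ)).toNat + 1)

/-- `W[i]`: the reverse of `T^∞[s^lex_i − τ .. s^lex_i + 2τ)`. -/
def Wstr (T : List ℕ) (τ : ℕ) (slex : ℕ → ℕ) (i : ℕ) : List ℕ :=
  ((List.range (3 * τ)).map fun k => tinf T ((slex i : ℤ) - (τ : ℤ) + (k : ℤ))).reverse

/- Pattern versions of the `L`-decomposition functions. -/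

noncomputable def perP (τ : ℕ) (P : List ℕ) : ℕ := per (P.take (3 * τ - 1))

/-- A pattern is periodic if `|P| ≥ 3τ−1` and `per(P[1..3τ−1]) ≤ τ/3`. -/
noncomputable def Periodic (τ : ℕ) (P : List ℕ) : Prop :=
  3 * τ - 1 ≤ P.length ∧ 3 * perP τ P ≤ τ

noncomputable def pend (τ : ℕ) (P : List ℕ) : ℕ :=
  1 + perP τ P + lcp P (P.drop (perP τ P))

noncomputable def LrootP (τ : ℕ) (P : List ℕ) : List ℕ :=
  (((Finset.range (perP τ P)).image fun t => (P.drop t).take (perP τ P)).min).untopD []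

noncomputable def LheadP (τ : ℕ) (P : List ℕ) : ℕ :=
  sInf {s | s < perP τ P ∧ (P.drop s).take (perP τ P) = LrootP τ P}

noncomputable def LexpP (τ : ℕ) (P : List ℕ) : ℕ :=
  (pend τ P - 1 - LheadP τ P) / perP τ P

noncomputable def LtailP (τ : ℕ) (P : List ℕ) : ℕ :=
  (pend τ P - 1 - LheadP τ P) % perP τ P

noncomputable def pendfullP (τ : ℕ) (P : List ℕ) : ℕ := pend τ P - LtailP τ P

noncomputable def typP (τ : ℕ) (P : List ℕ) : ℤ :=
  if pend τ P ≤ P.length ∧ idx P (pend τ P - perP τ P) < idx P (pend τ P)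
    then 1 else -1

/-- `pow(H)`: the prefix of length `|H|·⌈τ/|H|⌉` of `H^∞`. -/
def powS (τ : ℕ) (H : List ℕ) : List ℕ :=
  (List.replicate ((τ + H.length - 1) / H.length) H).flatten

end CSA

/-!
A root `H = L-root(j)` is the least rotation of `W = T[j..j+p)`, where `p` is the least period
of the window `T[j..j+3τ-1)`. A rotation of `W` fixed by a shift `0 < d < p` would make `d` a
period of the window, so `H` is a Lyndon word of length `p ≤ τ/3`.

If `X < Y` with `Y` Lyndon, then `XY < YX`: either they differ before `|X|`, or `Y = XZ` and
`XZ < ZX` by the Lyndon property. From `XY ≤ YX` one gets `X^a Y^b ≤ Y^b X^a`, hence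
`X^a ≤ Y^b` whenever `a|X| = b|Y|`, so `X^ω ≤ Y^ω`; equality on the first `|X| + |Y|` letters
would force `XY = YX`. Thus `X^ω` and `Y^ω` differ strictly, in favour of `X^ω`, before position
`|X| + |Y| ≤ τ`, and `pow(X)`, `pow(Y)` are prefixes of length `≥ τ` of `X^ω`, `Y^ω`.
-/

namespace List

variable {α : Type*} [LinearOrder α]

theorem append_lt_append_of_lt_of_not_prefix {u v : List α} (h : u < v) (hpre : ¬ u <+: v)
    (s t : List α) : u ++ s < v ++ t := by
  induction h with
  | nil => exact absurd (nil_prefix) hpre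
  | cons _ ih => exact Lex.cons (ih fun hp => hpre (cons_prefix_cons.mpr ⟨rfl, hp⟩))
  | rel hab => exact Lex.rel hab

theorem append_lt_append_of_lt_of_length_eq {u v : List α} (h : u < v)
    (hl : u.length = v.length) (s t : List α) : u ++ s < v ++ t :=
  append_lt_append_of_lt_of_not_prefix h (fun hp => h.ne (hp.eq_of_length hl)) s t

theorem le_of_append_le_append_of_length_eq {u v s t : List α} (h : u ++ s ≤ v ++ t)
    (hl : u.length = v.length) : u ≤ v :=
  not_lt.mp fun hvu => (append_lt_append_of_lt_of_length_eq hvu hl.symm t s).not_ge h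

theorem take_le_take_of_le_of_length_eq {u v : List α} (h : u ≤ v)
    (hl : u.length = v.length) (n : ℕ) : u.take n ≤ v.take n := by
  rw [← take_append_drop n u, ← take_append_drop n v] at h
  exact le_of_append_le_append_of_length_eq h (by simp [hl])

theorem append_le_append_right_of_length_eq {u v : List α} (h : u ≤ v)
    (hl : u.length = v.length) (s : List α) : u ++ s ≤ v ++ s := by
  rcases h.lt_or_eq with h | rfl
  · exact (append_lt_append_of_lt_of_length_eq h hl s s).le
  · exact le_rfl

theorem append_le_append_left {u v : List α} (h : u ≤ v) (s : List α) : s ++ u ≤ s ++ v := by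
  rcases h.lt_or_eq with h | rfl
  · exact (append_left_lt h).le
  · exact le_rfl

theorem lt_of_take_lt_take {u v : List α} {n : ℕ} (h : u.take n < v.take n)
    (hu : n ≤ u.length) (hv : n ≤ v.length) : u < v := by
  rw [← take_append_drop n u, ← take_append_drop n v]
  exact append_lt_append_of_lt_of_length_eq h (by simp [hu, hv]) _ _

theorem not_prefix_of_take_lt_take {u v : List α} {n : ℕ} (h : u.take n < v.take n)
    (hu : n ≤ u.length) : ¬ u <+: v := by
  intro hp
  rw [prefix_iff_eq_take.mp hp, take_take, min_eq_left hu] at h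
  exact h.false

theorem flatten_replicate_append_le {u v : List α} (h : u ++ v ≤ v ++ u) (a : ℕ) :
    (replicate a u).flatten ++ v ≤ v ++ (replicate a u).flatten := by
  induction a with
  | zero => simp
  | succ a ih =>
    rw [replicate_succ, flatten_cons]
    calc u ++ (replicate a u).flatten ++ v = u ++ ((replicate a u).flatten ++ v) := by simp
      _ ≤ u ++ (v ++ (replicate a u).flatten) := append_le_append_left ih u
      _ = (u ++ v) ++ (replicate a u).flatten := by simp
      _ ≤ (v ++ u) ++ (replicate a u).flatten :=
        append_le_append_right_of_length_eq h (by simp [Nat.add_comm]) _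
      _ = v ++ (u ++ (replicate a u).flatten) := by simp

theorem append_flatten_replicate_le {u v : List α} (h : u ++ v ≤ v ++ u) (b : ℕ) :
    u ++ (replicate b v).flatten ≤ (replicate b v).flatten ++ u := by
  induction b with
  | zero => simp
  | succ b ih =>
    rw [replicate_succ, flatten_cons]
    calc u ++ (v ++ (replicate b v).flatten) = (u ++ v) ++ (replicate b v).flatten := by simp
      _ ≤ (v ++ u) ++ (replicate b v).flatten :=
        append_le_append_right_of_length_eq h (by simp [Nat.add_comm]) _
      _ = v ++ (u ++ (replicate b v).flatten) := by simp
      _ ≤ v ++ ((replicate b v).flatten ++ u) := append_le_append_left ih v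
      _ = v ++ (replicate b v).flatten ++ u := by simp

theorem flatten_replicate_le_flatten_replicate {u v : List α} (h : u ++ v ≤ v ++ u) {a b : ℕ}
    (hab : a * u.length = b * v.length) :
    (replicate a u).flatten ≤ (replicate b v).flatten :=
  le_of_append_le_append_of_length_eq
    (append_flatten_replicate_le (flatten_replicate_append_le h a) b) (by simpa using hab)

def IsLyndon (w : List α) : Prop := ∀ d, 0 < d → d < w.length → w < w.rotate d

theorem append_lt_append_of_lt_of_isLyndon {u v : List α} (hu : u ≠ []) (hv : v.IsLyndon)
    (h : u < v) : u ++ v < v ++ u := by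
  by_cases hpre : u <+: v
  · obtain ⟨z, rfl⟩ := hpre
    have hz : z ≠ [] := by rintro rfl; simp at h
    have hzu : u ++ z < z ++ u := by
      rw [← rotate_append_length_eq u z]
      exact hv _ (length_pos_iff.mpr hu) (by simp [length_pos_iff.mpr hz])
    simpa using append_left_lt (l₁ := u) hzu
  · exact append_lt_append_of_lt_of_not_prefix h hpre _ _

def minRotation (w : List α) : List α := ((Finset.range w.length).image w.rotate).min.untopD []

theorem exists_rotate_eq_minRotation {w : List α} (hw : w ≠ []) :
    ∃ s, w.rotate s = w.minRotation := by
  have hne : ((Finset.range w.length).image w.rotate).Nonempty := by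
    simpa using hw
  obtain ⟨s, -, hs⟩ := Finset.mem_image.mp (Finset.min'_mem _ hne)
  exact ⟨s, by rw [hs, minRotation, ← Finset.coe_min' hne, WithTop.untopD_coe]⟩

theorem length_minRotation (w : List α) : w.minRotation.length = w.length := by
  rcases eq_or_ne w [] with rfl | hw
  · simp [minRotation]
  obtain ⟨s, hs⟩ := exists_rotate_eq_minRotation hw
  rw [← hs, length_rotate]

theorem minRotation_le_rotate (w : List α) (r : ℕ) : w.minRotation ≤ w.rotate r := by
  rcases eq_or_ne w [] with rfl | hw
  · simp [minRotation]
  rw [← rotate_mod]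
  exact WithTop.untopD_le (Finset.min_le (Finset.mem_image_of_mem _
    (Finset.mem_range.mpr (Nat.mod_lt _ (length_pos_iff.mpr hw)))))

theorem isLyndon_minRotation {w : List α}
    (hprim : ∀ d, 0 < d → d < w.length → w.rotate d ≠ w) : w.minRotation.IsLyndon := by
  rcases eq_or_ne w [] with rfl | hw
  · simp [IsLyndon, minRotation]
  obtain ⟨s, hs⟩ := exists_rotate_eq_minRotation hw
  intro d hd hdw
  rw [← hs, length_rotate] at hdw
  rw [← hs]
  have hle : w.rotate s ≤ (w.rotate s).rotate d := by
    rw [rotate_rotate, hs]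
    exact minRotation_le_rotate w _
  refine hle.lt_of_ne fun heq => hprim d hd hdw ?_
  rw [rotate_rotate, Nat.add_comm, ← rotate_rotate, rotate_eq_rotate] at heq
  exact heq.symm

end List

namespace Stream'

variable {α : Type*}

theorem take_mul_length_cycle (u : List α) (hu : u ≠ []) (a : ℕ) :
    (cycle u hu).take (a * u.length) = (List.replicate a u).flatten := by
  induction a with
  | zero => simp
  | succ a ih =>
    rw [List.replicate_succ, List.flatten_cons, ← ih, append_take, ← cycle_eq,
      Nat.add_mul, one_mul, Nat.add_comm]

theorem take_cycle_eq_append_of_take_eq {u v : List α} (hu : u ≠ []) (hv : v ≠ [])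
    (h : (cycle u hu).take (u.length + v.length) = (cycle v hv).take (u.length + v.length)) :
    (cycle u hu).take (u.length + v.length) = u ++ v := by
  have hv' : (cycle u hu).take v.length = v := by
    have := congrArg (List.take v.length) h
    rwa [take_take, take_take, min_eq_right (by omega), cycle_eq v hv,
      take_append_of_le_length _ _ _ le_rfl, List.take_length] at this
  conv_lhs => rw [cycle_eq u hu, ← append_take, hv']

variable [LinearOrder α]

theorem take_cycle_le_of_append_le {u v : List α} (hu : u ≠ []) (hv : v ≠ [])
    (h : u ++ v ≤ v ++ u) (m : ℕ) : (cycle u hu).take m ≤ (cycle v hv).take m := by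
  have hu0 := List.length_pos_iff.mpr hu
  have hv0 := List.length_pos_iff.mpr hv
  have hm : m ≤ m * v.length * u.length :=
    Nat.le_mul_of_pos_right _ hu0 |>.trans' (Nat.le_mul_of_pos_right _ hv0)
  -- compare inside the equal-length powers `u ^ (m * |v|)` and `v ^ (m * |u|)`
  rw [← min_eq_right hm, ← take_take, ← take_take, take_mul_length_cycle,
    show m * v.length * u.length = m * u.length * v.length by ring, take_mul_length_cycle]
  refine List.take_le_take_of_le_of_length_eq
    (List.flatten_replicate_le_flatten_replicate h (by ring)) ?_ m
  simp only [List.length_flatten, List.map_replicate, List.sum_replicate, smul_eq_mul]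
  ring

theorem take_cycle_lt_of_append_lt {u v : List α} (hu : u ≠ []) (hv : v ≠ [])
    (h : u ++ v < v ++ u) :
    (cycle u hu).take (u.length + v.length) < (cycle v hv).take (u.length + v.length) := by
  refine (take_cycle_le_of_append_le hu hv h.le _).lt_of_ne fun heq => h.ne ?_
  rw [← take_cycle_eq_append_of_take_eq hu hv heq, heq, Nat.add_comm,
    take_cycle_eq_append_of_take_eq hv hu (by rw [Nat.add_comm]; exact heq.symm)]

end Stream'

namespace CSA

section IsPeriod

variable {S : List ℕ} {p : ℕ}

theorem IsPeriod.length_take (hp : IsPeriod S p) : (S.take p).length = p :=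
  List.length_take_of_le hp.2.1

theorem IsPeriod.getElem?_add (hp : IsPeriod S p) {i : ℕ} (hi : i + p < S.length) :
    S[i]? = S[i + p]? := by
  have := hp.2.2 i hi
  rw [List.getD_eq_getElem _ _ (by omega), List.getD_eq_getElem _ _ hi] at this
  rw [List.getElem?_eq_getElem (by omega), List.getElem?_eq_getElem hi, this]

theorem IsPeriod.getElem?_mod (hp : IsPeriod S p) : ∀ i, i < S.length → S[i]? = S[i % p]? := by
  have hp0 := hp.1
  intro i
  induction i using Nat.strong_induction_on with
  | _ i ih =>
    intro hi
    rcases lt_or_ge i p with hip | hpi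
    · rw [Nat.mod_eq_of_lt hip]
    · obtain ⟨k, rfl⟩ := Nat.exists_eq_add_of_le' hpi
      rw [← hp.getElem?_add hi, ih k (by omega) (by omega), Nat.add_mod_right]

theorem IsPeriod.getElem?_eq_getElem?_take_mod (hp : IsPeriod S p) {i : ℕ}
    (hi : i < S.length) : S[i]? = (S.take p)[i % p]? := by
  rw [hp.getElem?_mod i hi, List.getElem?_take_of_lt (Nat.mod_lt _ hp.1)]

theorem IsPeriod.take_drop_eq_rotate (hp : IsPeriod S p) {t : ℕ} (ht : t + p ≤ S.length) :
    (S.drop t).take p = (S.take p).rotate t := by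
  refine List.ext_getElem? fun k => ?_
  rcases lt_or_ge k p with hk | hk
  · rw [List.getElem?_rotate (by rw [hp.length_take]; exact hk), hp.length_take,
      List.getElem?_take_of_lt hk, List.getElem?_drop,
      hp.getElem?_eq_getElem?_take_mod (by omega), Nat.add_comm]
  · rw [List.getElem?_eq_none (by rw [List.length_take]; omega),
      List.getElem?_eq_none (by rw [List.length_rotate, hp.length_take]; exact hk)]

theorem IsPeriod.of_rotate_take_eq (hp : IsPeriod S p) {d : ℕ} (hd : 0 < d)
    (hdS : d ≤ S.length) (hrot : (S.take p).rotate d = S.take p) : IsPeriod S d := by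
  refine ⟨hd, hdS, fun i hi => ?_⟩
  have : S[i]? = S[i + d]? :=
    calc S[i]? = ((S.take p).rotate d)[i % p]? := by
          rw [hrot, hp.getElem?_eq_getElem?_take_mod (by omega)]
      _ = (S.take p)[(i + d) % p]? := by
        rw [List.getElem?_rotate (by rw [hp.length_take]; exact Nat.mod_lt _ hp.1),
          hp.length_take, Nat.mod_add_mod]
      _ = S[i + d]? := (hp.getElem?_eq_getElem?_take_mod hi).symm
  simp only [List.getD_eq_getElem?_getD, this]

end IsPeriod

theorem isPeriod_per {S : List ℕ} (hS : S ≠ []) : IsPeriod S (per S) := by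
  have hlen : IsPeriod S S.length := ⟨List.length_pos_iff.mpr hS, le_rfl, fun _ hi => by omega⟩
  exact Nat.sInf_mem (s := {p | IsPeriod S p}) ⟨_, hlen⟩

theorem per_le {S : List ℕ} {d : ℕ} (hd : IsPeriod S d) : per S ≤ d := Nat.sInf_le hd

theorem length_sub {T : List ℕ} {i j : ℕ} (hi : 1 ≤ i) (hj : j ≤ T.length + 1) :
    (sub T i j).length = j - i := by
  simp only [sub, List.length_take, List.length_drop]
  omega

theorem take_drop_sub (T : List ℕ) {i j t m : ℕ} (hi : 1 ≤ i) (h : t + m ≤ j - i) :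
    ((sub T i j).drop t).take m = sub T (i + t) (i + t + m) := by
  simp only [sub, List.drop_take, List.take_take, List.drop_drop]
  congr 2 <;> omega

section Lroot

variable {T : List ℕ} {τ j : ℕ}

theorem length_window (hj : j ∈ R T τ) : (sub T j (j + 3 * τ - 1)).length = 3 * τ - 1 := by
  obtain ⟨hj1, hjT, -⟩ := hj
  rw [length_sub hj1 (by omega)]
  omega

theorem isPeriod_per_window (hτ : 1 ≤ τ) (hj : j ∈ R T τ) :
    IsPeriod (sub T j (j + 3 * τ - 1)) (per (sub T j (j + 3 * τ - 1))) :=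
  isPeriod_per (List.ne_nil_of_length_pos (by rw [length_window hj]; omega))

theorem Lroot_eq_minRotation (hτ : 1 ≤ τ) (hj : j ∈ R T τ) :
    Lroot T τ j =
      ((sub T j (j + 3 * τ - 1)).take (per (sub T j (j + 3 * τ - 1)))).minRotation := by
  have hp := isPeriod_per_window hτ hj
  have hwlen := length_window hj
  have h3p := hj.2.2
  rw [Lroot, List.minRotation, hp.length_take]
  congr 2
  refine Finset.image_congr fun t ht => ?_
  rw [Finset.mem_coe, Finset.mem_range] at ht
  rw [← take_drop_sub T (j := j + 3 * τ - 1) hj.1 (by omega), hp.take_drop_eq_rotate (by omega)]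

theorem length_Lroot (hτ : 1 ≤ τ) (hj : j ∈ R T τ) :
    (Lroot T τ j).length = per (sub T j (j + 3 * τ - 1)) := by
  rw [Lroot_eq_minRotation hτ hj, List.length_minRotation,
    (isPeriod_per_window hτ hj).length_take]

theorem Lroot_ne_nil (hτ : 1 ≤ τ) (hj : j ∈ R T τ) : Lroot T τ j ≠ [] :=
  List.ne_nil_of_length_pos (by rw [length_Lroot hτ hj]; exact (isPeriod_per_window hτ hj).1)

theorem three_mul_length_Lroot_le (hτ : 1 ≤ τ) (hj : j ∈ R T τ) :
    3 * (Lroot T τ j).length ≤ τ := by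
  rw [length_Lroot hτ hj]
  exact hj.2.2

theorem isLyndon_Lroot (hτ : 1 ≤ τ) (hj : j ∈ R T τ) : (Lroot T τ j).IsLyndon := by
  have hp := isPeriod_per_window hτ hj
  rw [Lroot_eq_minRotation hτ hj]
  refine List.isLyndon_minRotation fun d hd hdp hrot => ?_
  rw [hp.length_take] at hdp
  have := per_le (hp.of_rotate_take_eq hd (hdp.le.trans hp.2.1) hrot)
  omega

end Lroot

theorem length_powS (τ : ℕ) (H : List ℕ) :
    (powS τ H).length = (τ + H.length - 1) / H.length * H.length := by
  simp [powS]

theorem le_length_powS (τ : ℕ) {H : List ℕ} (hH : H ≠ []) : τ ≤ (powS τ H).length := by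
  have := Nat.lt_div_mul_add (a := τ + H.length - 1) (List.length_pos_iff.mpr hH)
  rw [length_powS]
  omega

theorem take_powS {τ N : ℕ} {H : List ℕ} (hH : H ≠ []) (hN : N ≤ τ) :
    (powS τ H).take N = (Stream'.cycle H hH).take N := by
  rw [powS, ← Stream'.take_mul_length_cycle H hH, Stream'.take_take,
    min_eq_right (hN.trans (length_powS τ H ▸ le_length_powS τ hH))]

theorem powS_lt_of_lt {τ : ℕ} {X Y : List ℕ} (hX : X ≠ []) (hY : Y.IsLyndon)
    (hXY : X.length + Y.length ≤ τ) (h : X < Y) :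
    powS τ X < powS τ Y ∧ ¬ powS τ X <+: powS τ Y := by
  have hY0 : Y ≠ [] := by rintro rfl; exact List.not_lt_nil _ h
  have hcyc := Stream'.take_cycle_lt_of_append_lt hX hY0
    (List.append_lt_append_of_lt_of_isLyndon hX hY h)
  rw [← take_powS hX hXY, ← take_powS hY0 hXY] at hcyc
  have hlenX := (le_length_powS τ hX).trans' hXY
  exact ⟨List.lt_of_take_lt_take hcyc hlenX ((le_length_powS τ hY0).trans' hXY),
    List.not_prefix_of_take_lt_take hcyc hlenX⟩

theorem statement_18_general
    (τ : ℕ) (T : List ℕ)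
    (hτ : 1 ≤ τ)
    (Roots : Set (List ℕ)) (hRoots : Roots = {H | ∃ j ∈ R T τ, Lroot T τ j = H}) :
    (∀ X ∈ Roots, ∀ Y ∈ Roots, X < Y → powS τ X < powS τ Y) ∧
    (∀ X ∈ Roots, ∀ Y ∈ Roots, X ≠ Y →
      powS τ X ≠ powS τ Y ∧ ¬ powS τ X <+: powS τ Y) := by
  have key : ∀ X ∈ Roots, ∀ Y ∈ Roots, X < Y →
      powS τ X < powS τ Y ∧ ¬ powS τ X <+: powS τ Y := by
    rw [hRoots]
    rintro _ ⟨i, hi, rfl⟩ _ ⟨j, hj, rfl⟩ h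
    have hi3 := three_mul_length_Lroot_le hτ hi
    have hj3 := three_mul_length_Lroot_le hτ hj
    exact powS_lt_of_lt (Lroot_ne_nil hτ hi) (isLyndon_Lroot hτ hj) (by omega) h
  refine ⟨fun X hX Y hY h => (key X hX Y hY h).1, fun X hX Y hY hne => ?_⟩
  rcases hne.lt_or_gt with h | h
  · exact ⟨(key X hX Y hY h).1.ne, (key X hX Y hY h).2⟩
  -- core's `List.le a b` unfolds to `¬ b < a`
  · exact ⟨(key Y hY X hX h).1.ne', fun hpre => hpre.le (key Y hY X hX h).1⟩

/-- Properties of the `pow` map on `Roots`. -/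
theorem statement_18
    (σ n τ : ℕ) (T : List ℕ)
    (hσ : 2 ≤ σ) (hn : 2 ≤ n) (hτ : 1 ≤ τ)
    (hlen : T.length = n) (halph : ∀ c ∈ T, c < σ)
    (hlast : idx T n = 0) (huniq : ∀ i, 1 ≤ i → i < n → idx T i ≠ 0)
    (Roots : Set (List ℕ)) (hRoots : Roots = {H | ∃ j ∈ R T τ, Lroot T τ j = H}) :
    (∀ X ∈ Roots, ∀ Y ∈ Roots, X < Y → powS τ X < powS τ Y) ∧
    (∀ X ∈ Roots, ∀ Y ∈ Roots, X ≠ Y →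
      powS τ X ≠ powS τ Y ∧ ¬ powS τ X <+: powS τ Y) :=
  statement_18_general τ T hτ Roots hRoots
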